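/- Let d ≥ 1 and let u be a smooth (C^∞) function on [−1,1]. Then ∫_{−1}^{1} (L u)² dν_d = ∫_{−1}^{1} |u''|² ν² dν_d + d ∫_{−1}^{1} |u'|² ν dν_d, where L u = ν u'' − d x u'. -/

import Mathlib

open MeasureTheory Real

noncomputable section

/-- The normalization constant `Z_d = √π Γ(d/2)/Γ((d+1)/2)`. -/
def Zd (d : ℕ) : ℝ := Real.sqrt π * Real.Gamma ((d : ℝ) / 2) / Real.Gamma (((d : ℝ) + 1) / 2)

/-- The probability measure `dν_d(x) = Z_d⁻¹ (1 − x²)^{d/2−1} dx` on `(−1,1)`. -/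
def nuMeas (d : ℕ) : Measure ℝ :=
  (volume.restrict (Set.Ioo (-1 : ℝ) 1)).withDensity
    fun x => ENNReal.ofReal ((1 - x ^ 2) ^ ((d : ℝ) / 2 - 1) / Zd d)

open Set intervalIntegral in
/-- Integrability of the weight `(1-x²)^s` on `(-1,1)` for `s > -1`. -/
lemma integrableOn_nu_weight {s : ℝ} (hs : -1 < s) :
    IntegrableOn (fun x : ℝ => (1 - x ^ 2) ^ s) (Set.Ioo (-1 : ℝ) 1) := by
  have h1 : IntegrableOn (fun x : ℝ => (1 - x) ^ s) (Set.Ioo (-1 : ℝ) 1) := by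
    have h := (intervalIntegrable_rpow' (a := 2) (b := 0) hs).comp_sub_left 1
    norm_num at h
    have h' : IntervalIntegrable (fun x : ℝ => (1 - x) ^ s) volume (-1) 1 := h
    exact (intervalIntegrable_iff_integrableOn_Ioo_of_le (by norm_num)).1 h'
  have h2 : IntegrableOn (fun x : ℝ => (1 + x) ^ s) (Set.Ioo (-1 : ℝ) 1) := by
    have h := (intervalIntegrable_rpow' (a := 0) (b := 2) hs).comp_add_right 1
    norm_num at h
    have h' : IntervalIntegrable (fun x : ℝ => (1 + x) ^ s) volume (-1) 1 := by
      simpa [add_comm] using h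
    exact (intervalIntegrable_iff_integrableOn_Ioo_of_le (by norm_num)).1 h'
  have hmeas : AEStronglyMeasurable (fun x : ℝ => (1 - x ^ 2) ^ s)
      (volume.restrict (Set.Ioo (-1 : ℝ) 1)) := by
    apply Measurable.aestronglyMeasurable; fun_prop
  refine Integrable.mono' (g := fun x => (1 - x) ^ s + (1 + x) ^ s + 1) ?_ hmeas ?_
  · exact (h1.add h2).add (integrableOn_const measure_Ioo_lt_top.ne)
  filter_upwards [ae_restrict_mem measurableSet_Ioo] with x hx
  obtain ⟨hx1, hx2⟩ := hx
  have ha : (0:ℝ) < 1 - x := by linarith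
  have hb : (0:ℝ) < 1 + x := by linarith
  have hab : (1:ℝ) - x ^ 2 = (1 - x) * (1 + x) := by ring
  have hnu : (0:ℝ) < 1 - x ^ 2 := by rw [hab]; positivity
  rw [Real.norm_eq_abs, abs_of_nonneg (Real.rpow_nonneg hnu.le _)]
  rcases le_or_gt 0 s with hs0 | hs0
  · have : (1 - x ^ 2) ^ s ≤ 1 := Real.rpow_le_one hnu.le (by nlinarith) hs0
    have h1' : (0:ℝ) ≤ (1 - x) ^ s := Real.rpow_nonneg ha.le _
    have h2' : (0:ℝ) ≤ (1 + x) ^ s := Real.rpow_nonneg hb.le _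
    simpa using this.trans (by linarith)
  · have hsplit : (1 - x ^ 2) ^ s = (1 - x) ^ s * (1 + x) ^ s := by
      rw [hab, Real.mul_rpow ha.le hb.le]
    rcases le_or_gt 0 x with hx0 | hx0
    · have : (1 + x) ^ s ≤ 1 :=
        Real.rpow_le_one_of_one_le_of_nonpos (by linarith) hs0.le
      have : (1 - x) ^ s * (1 + x) ^ s ≤ (1 - x) ^ s * 1 :=
        mul_le_mul_of_nonneg_left this (Real.rpow_nonneg ha.le _)
      have h2' : (0:ℝ) ≤ (1 + x) ^ s := Real.rpow_nonneg hb.le _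
      rw [hsplit]; simp only [mul_one] at this; simpa using by linarith
    · have : (1 - x) ^ s ≤ 1 :=
        Real.rpow_le_one_of_one_le_of_nonpos (by linarith) hs0.le
      have : (1 - x) ^ s * (1 + x) ^ s ≤ 1 * (1 + x) ^ s :=
        mul_le_mul_of_nonneg_right this (Real.rpow_nonneg hb.le _)
      have h1' : (0:ℝ) ≤ (1 - x) ^ s := Real.rpow_nonneg ha.le _
      rw [hsplit]; simp only [one_mul] at this; simpa using by linarith

set_option maxHeartbeats 1000000 in
theorem ultraspherical_L_squared (d : ℕ) (hd : 1 ≤ d)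
    (u : ℝ → ℝ) (hu : ContDiffOn ℝ (⊤ : ℕ∞) u (Set.Icc (-1 : ℝ) 1)) :
    ∫ x, ((1 - x ^ 2) * deriv (deriv u) x - (d : ℝ) * x * deriv u x) ^ 2 ∂(nuMeas d) =
      (∫ x, (deriv (deriv u) x) ^ 2 * (1 - x ^ 2) ^ 2 ∂(nuMeas d)) +
        (d : ℝ) * ∫ x, (deriv u x) ^ 2 * (1 - x ^ 2) ∂(nuMeas d) := by
  have hd1 : (1:ℝ) ≤ (d:ℝ) := by exact_mod_cast hd
  set s : ℝ := (d : ℝ) / 2 - 1 with hs_def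
  have hs : (-1:ℝ) < s := by simp only [hs_def]; linarith
  have hs1 : s + 1 = (d : ℝ) / 2 := by simp [hs_def]
  -- positivity of the normalization constant
  have hZ : 0 < Zd d := by
    have h1 : 0 < Real.Gamma ((d : ℝ) / 2) := Real.Gamma_pos_of_pos (by linarith)
    have h2 : 0 < Real.Gamma (((d : ℝ) + 1) / 2) := Real.Gamma_pos_of_pos (by linarith)
    have h3 : 0 < Real.sqrt π := Real.sqrt_pos.2 Real.pi_pos
    unfold Zd; positivity
  set I : Set ℝ := Set.Ioo (-1 : ℝ) 1 with hI_def
  set w : ℝ → ℝ := fun x => (1 - x ^ 2) ^ s / Zd d with hw_def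
  -- conversion of integrals w.r.t. nuMeas to weighted integrals on I
  have hwmeas : Measurable w := by
    simp only [hw_def]; fun_prop
  have hconv : ∀ f : ℝ → ℝ, ∫ x, f x ∂(nuMeas d) = ∫ x in I, f x * w x := by
    intro f
    have : nuMeas d = (volume.restrict I).withDensity
        fun x => ((Real.toNNReal (w x) : NNReal) : ENNReal) := by
      unfold nuMeas
      rfl
    rw [this, integral_withDensity_eq_integral_smul hwmeas.real_toNNReal f]
    refine setIntegral_congr_fun measurableSet_Ioo fun x hx => ?_
    have hnu : (0:ℝ) < 1 - x ^ 2 := by nlinarith [hx.1, hx.2]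
    have hw0 : 0 ≤ w x := by
      simp only [hw_def]; positivity
    simp [NNReal.smul_def, Real.coe_toNNReal _ hw0, mul_comm]
  -- the first and second "derivatives within Icc"
  set v : ℝ → ℝ := derivWithin u (Set.Icc (-1 : ℝ) 1) with hv_def
  set v2 : ℝ → ℝ := derivWithin v (Set.Icc (-1 : ℝ) 1) with hv2_def
  have hud : UniqueDiffOn ℝ (Set.Icc (-1 : ℝ) 1) := uniqueDiffOn_Icc (by norm_num)
  have hv : ContDiffOn ℝ (⊤ : ℕ∞) v (Set.Icc (-1 : ℝ) 1) := hu.derivWithin hud (by simp)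
  have hv2 : ContDiffOn ℝ (⊤ : ℕ∞) v2 (Set.Icc (-1 : ℝ) 1) := hv.derivWithin hud (by simp)
  have hIccnhds : ∀ x ∈ I, Set.Icc (-1 : ℝ) 1 ∈ nhds x := fun x hx =>
    Icc_mem_nhds hx.1 hx.2
  -- on I, v = deriv u and v2 = deriv (deriv u)
  have hveq : ∀ x ∈ I, v x = deriv u x := fun x hx =>
    derivWithin_of_mem_nhds (hIccnhds x hx)
  have hdiffu : ∀ x ∈ I, DifferentiableAt ℝ u x := fun x hx =>
    ((hu.differentiableOn (by simp)) x (Set.Ioo_subset_Icc_self hx)).differentiableAt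
      (hIccnhds x hx)
  have hdiffv : ∀ x ∈ I, DifferentiableAt ℝ v x := fun x hx =>
    ((hv.differentiableOn (by simp)) x (Set.Ioo_subset_Icc_self hx)).differentiableAt
      (hIccnhds x hx)
  have hv2eq : ∀ x ∈ I, v2 x = deriv (deriv u) x := by
    intro x hx
    have h1 : v2 x = deriv v x := derivWithin_of_mem_nhds (hIccnhds x hx)
    have h2 : deriv v x = deriv (deriv u) x := by
      apply Filter.EventuallyEq.deriv_eq
      filter_upwards [isOpen_Ioo.mem_nhds hx] with y hy
      exact hveq y hy
    rw [h1, h2]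
  have hvderiv : ∀ x ∈ I, HasDerivAt v (v2 x) x := by
    intro x hx
    have h1 : v2 x = deriv v x := derivWithin_of_mem_nhds (hIccnhds x hx)
    rw [h1]
    exact (hdiffv x hx).hasDerivAt
  -- bounds for v and v2 on Icc
  obtain ⟨M1, hM1⟩ := (isCompact_Icc (a := (-1:ℝ)) (b := 1)).exists_bound_of_continuousOn
    (hv.continuousOn)
  obtain ⟨M2, hM2⟩ := (isCompact_Icc (a := (-1:ℝ)) (b := 1)).exists_bound_of_continuousOn
    (hv2.continuousOn)
  set M : ℝ := max (max M1 M2) 1 with hM_def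
  have hM0 : (0:ℝ) < M := lt_of_lt_of_le one_pos (le_max_right _ _)
  have hMv : ∀ x ∈ I, |v x| ≤ M := fun x hx =>
    le_trans (hM1 x (Set.Ioo_subset_Icc_self hx))
      (le_trans (le_max_left M1 M2) (le_max_left _ _))
  have hMv2 : ∀ x ∈ I, |v2 x| ≤ M := fun x hx =>
    le_trans (hM2 x (Set.Ioo_subset_Icc_self hx))
      (le_trans (le_max_right M1 M2) (le_max_left _ _))
  -- the key function for integration by parts and its derivative
  set H : ℝ → ℝ := fun x => x * (1 - x ^ 2) ^ (s + 1) * (v x) ^ 2 with hH_def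
  set G : ℝ → ℝ := fun x =>
    (1 - x ^ 2) ^ (s + 1) * (v x) ^ 2 - (d : ℝ) * x ^ 2 * (1 - x ^ 2) ^ s * (v x) ^ 2
      + 2 * x * (1 - x ^ 2) ^ (s + 1) * (v x * v2 x) with hG_def
  have hnupos : ∀ x ∈ I, (0:ℝ) < 1 - x ^ 2 := fun x hx => by nlinarith [hx.1, hx.2]
  have hHderiv : ∀ x ∈ I, HasDerivAt H (G x) x := by
    intro x hx
    have hnu := hnupos x hx
    have h1 : HasDerivAt (fun y : ℝ => 1 - y ^ 2) (-(2 * x)) x := by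
      simpa using (hasDerivAt_pow 2 x).const_sub 1
    have h2 := h1.rpow_const (p := s + 1) (Or.inl hnu.ne')
    have h5 := ((hasDerivAt_id x).mul h2).mul ((hvderiv x hx).pow 2)
    have hx1 : s + 1 - 1 = s := by ring
    rw [hx1] at h5
    convert h5 using 1 <;> try rfl
    have hnu1 : (1 - x ^ 2) ^ (s + 1) = (1 - x ^ 2) ^ s * (1 - x ^ 2) :=
      Real.rpow_add_one hnu.ne' s
    simp only [hG_def, hnu1, hs1, id_eq, Pi.pow_apply, Pi.mul_apply]
    push_cast
    ring
  -- a.e.-strong-measurability helpers on I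
  have hvmeas : AEStronglyMeasurable v (volume.restrict I) :=
    (hv.continuousOn.mono Set.Ioo_subset_Icc_self).aestronglyMeasurable measurableSet_Ioo
  have hv2meas : AEStronglyMeasurable v2 (volume.restrict I) :=
    (hv2.continuousOn.mono Set.Ioo_subset_Icc_self).aestronglyMeasurable measurableSet_Ioo
  have hrmeas : ∀ t : ℝ, AEStronglyMeasurable (fun x : ℝ => (1 - x ^ 2) ^ t)
      (volume.restrict I) := fun t => by
    apply Measurable.aestronglyMeasurable; fun_prop
  have hidmeas : AEStronglyMeasurable (fun x : ℝ => x) (volume.restrict I) :=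
    measurable_id.aestronglyMeasurable
  -- integrability of G on I
  have hGint : IntegrableOn G I := by
    have hGmeas : AEStronglyMeasurable G (volume.restrict I) := by
      have e1 := ((hrmeas (s+1)).mul (hvmeas.mul hvmeas))
      have e2 := ((((aestronglyMeasurable_const (b := (d:ℝ))).mul
        (hidmeas.mul hidmeas)).mul (hrmeas s)).mul (hvmeas.mul hvmeas))
      have e3 := (((aestronglyMeasurable_const (b := (2:ℝ))).mul hidmeas).mul
        (hrmeas (s+1))).mul (hvmeas.mul hv2meas)
      have := (e1.sub e2).add e3
      refine this.congr (Filter.Eventually.of_forall fun x => ?_)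
      simp only [Pi.add_apply, Pi.sub_apply, Pi.mul_apply, hG_def]
      ring
    refine Integrable.mono' ((integrableOn_nu_weight hs).const_mul ((3 + d) * M ^ 2))
      hGmeas ?_
    filter_upwards [ae_restrict_mem measurableSet_Ioo] with x hx
    have hnu := hnupos x hx
    have hnu1 : (0:ℝ) ≤ 1 - x ^ 2 := hnu.le
    have hx1 : |x| ≤ 1 := by
      rw [abs_le]; exact ⟨hx.1.le, hx.2.le⟩
    have hws : (0:ℝ) ≤ (1 - x ^ 2) ^ s := Real.rpow_nonneg hnu1 _
    have hsplit : (1 - x ^ 2) ^ (s + 1) = (1 - x ^ 2) ^ s * (1 - x ^ 2) :=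
      Real.rpow_add_one hnu.ne' s
    have hle1 : (1:ℝ) - x ^ 2 ≤ 1 := by nlinarith
    have hws1 : (1 - x ^ 2) ^ (s + 1) ≤ (1 - x ^ 2) ^ s := by
      rw [hsplit]
      exact mul_le_of_le_one_right hws hle1 |>.trans_eq (by ring)
    have hws1' : (0:ℝ) ≤ (1 - x ^ 2) ^ (s + 1) := Real.rpow_nonneg hnu1 _
    have hvb := hMv x hx
    have hv2b := hMv2 x hx
    have hv2' : (v x) ^ 2 ≤ M ^ 2 := by
      have := sq_abs (v x)
      nlinarith [abs_nonneg (v x)]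
    have hvv2 : |v x * v2 x| ≤ M ^ 2 := by
      rw [abs_mul]
      calc |v x| * |v2 x| ≤ M * M := by
            apply mul_le_mul hvb hv2b (abs_nonneg _) hM0.le
        _ = M ^ 2 := by ring
    simp only [hG_def]
    have t1 : |(1 - x ^ 2) ^ (s + 1) * (v x) ^ 2| ≤ M ^ 2 * (1 - x ^ 2) ^ s := by
      rw [abs_mul, abs_of_nonneg hws1', abs_of_nonneg (sq_nonneg _)]
      calc (1 - x ^ 2) ^ (s + 1) * (v x) ^ 2 ≤ (1 - x ^ 2) ^ s * M ^ 2 :=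
            mul_le_mul hws1 hv2' (sq_nonneg _) hws
        _ = M ^ 2 * (1 - x ^ 2) ^ s := by ring
    have t2 : |(d : ℝ) * x ^ 2 * (1 - x ^ 2) ^ s * (v x) ^ 2|
        ≤ (d : ℝ) * (M ^ 2 * (1 - x ^ 2) ^ s) := by
      have hx2 : x ^ 2 ≤ 1 := by nlinarith
      rw [abs_mul, abs_mul, abs_mul]
      rw [abs_of_nonneg (by positivity : (0:ℝ) ≤ (d:ℝ)),
        abs_of_nonneg (sq_nonneg x), abs_of_nonneg hws, abs_of_nonneg (sq_nonneg _)]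
      have : x ^ 2 * (1 - x ^ 2) ^ s * (v x) ^ 2 ≤ 1 * (1 - x ^ 2) ^ s * M ^ 2 := by
        apply mul_le_mul _ hv2' (sq_nonneg _) (by positivity)
        exact mul_le_mul_of_nonneg_right hx2 hws
      nlinarith [this]
    have t3 : |2 * x * (1 - x ^ 2) ^ (s + 1) * (v x * v2 x)|
        ≤ 2 * (M ^ 2 * (1 - x ^ 2) ^ s) := by
      rw [abs_mul, abs_mul, abs_mul]
      rw [abs_of_nonneg (by norm_num : (0:ℝ) ≤ 2), abs_of_nonneg hws1']
      have h1 : |x| * (1 - x ^ 2) ^ (s + 1) ≤ (1 - x ^ 2) ^ s := by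
        calc |x| * (1 - x ^ 2) ^ (s + 1) ≤ 1 * (1 - x ^ 2) ^ s := by
              apply mul_le_mul hx1 hws1 hws1' (by norm_num)
          _ = (1 - x ^ 2) ^ s := by ring
      calc 2 * |x| * (1 - x ^ 2) ^ (s + 1) * |v x * v2 x|
          ≤ 2 * ((1 - x ^ 2) ^ s) * M ^ 2 := by
            have := mul_le_mul h1 hvv2 (abs_nonneg _) hws
            nlinarith [this]
        _ = 2 * (M ^ 2 * (1 - x ^ 2) ^ s) := by ring
    calc ‖(1 - x ^ 2) ^ (s + 1) * v x ^ 2 - ↑d * x ^ 2 * (1 - x ^ 2) ^ s * v x ^ 2 +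
          2 * x * (1 - x ^ 2) ^ (s + 1) * (v x * v2 x)‖
        ≤ |(1 - x ^ 2) ^ (s + 1) * v x ^ 2| + |↑d * x ^ 2 * (1 - x ^ 2) ^ s * v x ^ 2|
          + |2 * x * (1 - x ^ 2) ^ (s + 1) * (v x * v2 x)| := by
          rw [Real.norm_eq_abs]
          exact (abs_add_le _ _).trans (add_le_add_left (abs_sub _ _) _)
      _ ≤ M ^ 2 * (1 - x ^ 2) ^ s + (d : ℝ) * (M ^ 2 * (1 - x ^ 2) ^ s)
          + 2 * (M ^ 2 * (1 - x ^ 2) ^ s) := add_le_add (add_le_add t1 t2) t3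
      _ = (3 + d) * M ^ 2 * (1 - x ^ 2) ^ s := by ring
  -- boundary limits of H
  have hHlim : ∀ c : ℝ, c = -1 ∨ c = 1 →
      Filter.Tendsto H (nhdsWithin c I) (nhds 0) := by
    intro c hc
    have hbase : Filter.Tendsto (fun x : ℝ => (1 - x ^ 2) ^ (s + 1) * M ^ 2)
        (nhdsWithin c I) (nhds 0) := by
      have hcont : ContinuousAt (fun x : ℝ => (1 - x ^ 2) ^ (s + 1)) c := by
        apply ContinuousAt.rpow_const
        · exact (continuous_const.sub (continuous_pow 2)).continuousAt
        · right; linarith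
      have hzero : ((1:ℝ) - c ^ 2) ^ (s + 1) = 0 := by
        have : (1:ℝ) - c ^ 2 = 0 := by rcases hc with h | h <;> rw [h] <;> ring
        rw [this, Real.zero_rpow (by linarith)]
      have := (hcont.tendsto.mono_left (nhdsWithin_le_nhds (s := I))).mul_const (M ^ 2)
      rw [hzero, zero_mul] at this
      exact this
    apply squeeze_zero_norm' _ hbase
    filter_upwards [self_mem_nhdsWithin] with x hx
    have hnu := hnupos x hx
    have hx1 : |x| ≤ 1 := by rw [abs_le]; exact ⟨hx.1.le, hx.2.le⟩
    have hws1' : (0:ℝ) ≤ (1 - x ^ 2) ^ (s + 1) := Real.rpow_nonneg hnu.le _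
    have hv2' : (v x) ^ 2 ≤ M ^ 2 := by
      have hvb := hMv x hx
      nlinarith [abs_nonneg (v x), sq_abs (v x)]
    simp only [hH_def, Real.norm_eq_abs, abs_mul, abs_of_nonneg hws1',
      abs_of_nonneg (sq_nonneg (v x))]
    calc |x| * (1 - x ^ 2) ^ (s + 1) * (v x) ^ 2
        ≤ 1 * (1 - x ^ 2) ^ (s + 1) * M ^ 2 := by
          apply mul_le_mul _ hv2' (sq_nonneg _) (by positivity)
          exact mul_le_mul_of_nonneg_right hx1 hws1'
      _ = (1 - x ^ 2) ^ (s + 1) * M ^ 2 := by ring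
  -- the integral of G over I vanishes
  have hGzero : ∫ x in I, G x = 0 := by
    have hIoo : I = Set.Ioo (-1 : ℝ) 1 := hI_def
    have hint : IntervalIntegrable G volume (-1) 1 := by
      rw [intervalIntegrable_iff_integrableOn_Ioo_of_le (by norm_num)]
      exact hGint
    have h1 : Filter.Tendsto H (nhdsWithin (-1 : ℝ) (Set.Ioi (-1 : ℝ))) (nhds 0) := by
      apply (hHlim (-1) (Or.inl rfl)).mono_left
      rw [← nhdsWithin_Ioo_eq_nhdsGT (by norm_num : (-1:ℝ) < 1)]
    have h2 : Filter.Tendsto H (nhdsWithin (1 : ℝ) (Set.Iio (1 : ℝ))) (nhds 0) := by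
      apply (hHlim 1 (Or.inr rfl)).mono_left
      rw [← nhdsWithin_Ioo_eq_nhdsLT (by norm_num : (-1:ℝ) < 1)]
    have := intervalIntegral.integral_eq_sub_of_hasDerivAt_of_tendsto
      (by norm_num : (-1:ℝ) < 1) hHderiv hint h1 h2
    rw [intervalIntegral.integral_of_le (by norm_num : (-1:ℝ) ≤ 1),
      MeasureTheory.integral_Ioc_eq_integral_Ioo] at this
    rw [hIoo, this, sub_zero]
  -- integrability of the three weighted integrands
  have hwnonneg : ∀ x ∈ I, 0 ≤ w x := by
    intro x hx
    have hnu := hnupos x hx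
    simp only [hw_def]
    positivity
  have hwle : ∀ x ∈ I, w x ≤ (1 - x ^ 2) ^ s / Zd d := fun x hx => le_refl _
  have hboundint : IntegrableOn (fun x => (1 - x ^ 2) ^ s / Zd d) I := by
    have := (integrableOn_nu_weight hs).const_mul (Zd d)⁻¹
    exact MeasureTheory.IntegrableOn.congr_fun this
      (fun x _ => by rw [div_eq_inv_mul]) measurableSet_Ioo
  have genBound : ∀ (f : ℝ → ℝ) (K : ℝ), 0 ≤ K →
      AEStronglyMeasurable f (volume.restrict I) →
      (∀ x ∈ I, |f x| ≤ K) → IntegrableOn (fun x => f x * w x) I := by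
    intro f K hK hfm hfb
    refine Integrable.mono' (hboundint.const_mul K) (hfm.mul (hwmeas.aestronglyMeasurable)) ?_
    filter_upwards [ae_restrict_mem measurableSet_Ioo] with x hx
    rw [Real.norm_eq_abs, abs_mul, abs_of_nonneg (hwnonneg x hx)]
    calc |f x| * w x ≤ K * w x :=
          mul_le_mul_of_nonneg_right (hfb x hx) (hwnonneg x hx)
      _ = K * ((1 - x ^ 2) ^ s / Zd d) := by rw [hw_def]
  have hnummeas : AEStronglyMeasurable (fun x : ℝ => 1 - x ^ 2) (volume.restrict I) :=
    (measurable_const.sub (measurable_id.pow_const 2)).aestronglyMeasurable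
  -- the three (unweighted) integrands in terms of v, v2
  set A : ℝ → ℝ := fun x => ((1 - x ^ 2) * v2 x - (d : ℝ) * x * v x) ^ 2 with hA_def
  set B : ℝ → ℝ := fun x => (v2 x) ^ 2 * (1 - x ^ 2) ^ 2 with hB_def
  set C : ℝ → ℝ := fun x => (v x) ^ 2 * (1 - x ^ 2) with hC_def
  have hIabs : ∀ x ∈ I, |x| ≤ 1 ∧ (0:ℝ) < 1 - x ^ 2 := fun x hx =>
    ⟨by rw [abs_le]; exact ⟨hx.1.le, hx.2.le⟩, hnupos x hx⟩
  have hAint : IntegrableOn (fun x => A x * w x) I := by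
    apply genBound _ ((((1:ℝ) + d) * M) ^ 2) (by positivity)
    · have g : AEStronglyMeasurable
          (fun x : ℝ => (1 - x ^ 2) * v2 x - (d:ℝ) * x * v x) (volume.restrict I) :=
        (hnummeas.mul hv2meas).sub
          ((aestronglyMeasurable_const.mul hidmeas).mul hvmeas)
      exact (g.mul g).congr (Filter.Eventually.of_forall fun x => by
        simp only [Pi.mul_apply, hA_def]; ring)
    · intro x hx
      obtain ⟨hx1, hnu⟩ := hIabs x hx
      have hnule : |1 - x ^ 2| ≤ 1 := by
        rw [abs_le]; constructor <;> nlinarith [sq_nonneg x]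
      have hlin : |(1 - x ^ 2) * v2 x - (d : ℝ) * x * v x| ≤ ((1:ℝ) + d) * M := by
        calc |(1 - x ^ 2) * v2 x - (d : ℝ) * x * v x|
            ≤ |(1 - x ^ 2) * v2 x| + |(d : ℝ) * x * v x| := abs_sub _ _
          _ ≤ 1 * M + (d : ℝ) * (1 * M) := by
              apply add_le_add
              · rw [abs_mul]
                exact mul_le_mul hnule (hMv2 x hx) (abs_nonneg _) (by norm_num)
              · rw [abs_mul, abs_mul, abs_of_nonneg (by positivity : (0:ℝ) ≤ (d:ℝ))]
                have hb : |x| * |v x| ≤ 1 * M :=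
                  mul_le_mul hx1 (hMv x hx) (abs_nonneg _) (by norm_num)
                calc (d:ℝ) * |x| * |v x| = (d:ℝ) * (|x| * |v x|) := by ring
                  _ ≤ (d:ℝ) * (1 * M) :=
                    mul_le_mul_of_nonneg_left hb (by positivity)
          _ = ((1:ℝ) + d) * M := by ring
      simp only [hA_def]
      rw [abs_pow]
      exact pow_le_pow_left₀ (abs_nonneg _) hlin 2
  have hBint : IntegrableOn (fun x => B x * w x) I := by
    apply genBound _ (M ^ 2) (by positivity)
    · exact ((hv2meas.mul hv2meas).mul (hnummeas.mul hnummeas)).congr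
        (Filter.Eventually.of_forall fun x => by simp only [Pi.mul_apply, hB_def]; ring)
    · intro x hx
      obtain ⟨hx1, hnu⟩ := hIabs x hx
      have hnule : |1 - x ^ 2| ≤ 1 := by
        rw [abs_le]; constructor <;> nlinarith [sq_nonneg x]
      simp only [hB_def]
      rw [abs_mul, abs_pow, abs_pow]
      calc |v2 x| ^ 2 * |1 - x ^ 2| ^ 2 ≤ M ^ 2 * 1 ^ 2 := by
            apply mul_le_mul _ (pow_le_pow_left₀ (abs_nonneg _) hnule 2)
              (by positivity) (by positivity)
            exact pow_le_pow_left₀ (abs_nonneg _) (hMv2 x hx) 2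
        _ = M ^ 2 := by ring
  have hCint : IntegrableOn (fun x => C x * w x) I := by
    apply genBound _ (M ^ 2) (by positivity)
    · exact ((hvmeas.mul hvmeas).mul hnummeas).congr
        (Filter.Eventually.of_forall fun x => by simp only [Pi.mul_apply, hC_def]; ring)
    · intro x hx
      obtain ⟨hx1, hnu⟩ := hIabs x hx
      have hnule : |1 - x ^ 2| ≤ 1 := by
        rw [abs_le]; constructor <;> nlinarith [sq_nonneg x]
      simp only [hC_def]
      rw [abs_mul, abs_pow]
      calc |v x| ^ 2 * |1 - x ^ 2| ≤ M ^ 2 * 1 := by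
            apply mul_le_mul _ hnule (abs_nonneg _) (by positivity)
            exact pow_le_pow_left₀ (abs_nonneg _) (hMv x hx) 2
        _ = M ^ 2 := by ring
  -- the pointwise algebraic identity
  have hkey : ∀ x ∈ I, A x * w x
      = B x * w x + (d : ℝ) * (C x * w x) + (-(d / Zd d)) * G x := by
    intro x hx
    have hnu := hnupos x hx
    simp only [hA_def, hB_def, hC_def, hG_def, hw_def,
      Real.rpow_add_one hnu.ne' s]
    field_simp
    ring
  -- assemble
  have hmain : ∫ x in I, A x * w x
      = (∫ x in I, B x * w x) + (d : ℝ) * ∫ x in I, C x * w x := by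
    rw [setIntegral_congr_fun measurableSet_Ioo hkey, ← hI_def]
    have e1 : ∫ x in I, (B x * w x + (d:ℝ) * (C x * w x) + -((d:ℝ) / Zd d) * G x)
        = (∫ x in I, (B x * w x + (d:ℝ) * (C x * w x)))
          + ∫ x in I, -((d:ℝ) / Zd d) * G x :=
      integral_add (hBint.add (hCint.const_mul _)) (hGint.const_mul _)
    have e2 : ∫ x in I, (B x * w x + (d:ℝ) * (C x * w x))
        = (∫ x in I, B x * w x) + ∫ x in I, (d:ℝ) * (C x * w x) :=
      integral_add hBint (hCint.const_mul _)
    rw [e1, e2, integral_const_mul, integral_const_mul, hGzero, mul_zero, add_zero]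
  calc ∫ x, ((1 - x ^ 2) * deriv (deriv u) x - (d : ℝ) * x * deriv u x) ^ 2 ∂(nuMeas d)
      = ∫ x in I, A x * w x := by
        rw [hconv]
        refine setIntegral_congr_fun measurableSet_Ioo fun x hx => ?_
        simp only [hA_def, hveq x hx, hv2eq x hx]
    _ = (∫ x in I, B x * w x) + (d : ℝ) * ∫ x in I, C x * w x := hmain
    _ = (∫ x, (deriv (deriv u) x) ^ 2 * (1 - x ^ 2) ^ 2 ∂(nuMeas d)) +
        (d : ℝ) * ∫ x, (deriv u x) ^ 2 * (1 - x ^ 2) ∂(nuMeas d) := by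
        rw [hconv, hconv]
        congr 1
        · refine setIntegral_congr_fun measurableSet_Ioo fun x hx => ?_
          simp only [hB_def, hv2eq x hx]
        · congr 1
          refine setIntegral_congr_fun measurableSet_Ioo fun x hx => ?_
          simp only [hC_def, hveq x hx]
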